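/- Let Γ be the random bipartite graph, and let X ⊆ {l,r}. Suppose g ∈ Sym_{l,r}(Γ) is a bijection such that for every finite T ⊆ Γ with |T ∩ R_l| ≥ 2 and |T ∩ R_r| ≥ 2, the restriction g↾T belongs to F(S_X(Γ)*). Then g ∈ S_X(Γ)*. -/

import Mathlib

/-! Preamble: bipartite graphs, the random bipartite graph, side-preserving
permutation groups, switches, switch groups, and related notions. -/

/-- A bipartite graph on a vertex type `V`: the sides `left` and `right`
partition `V`, both sides are nonempty, and `adj` (the relation `P₁`) only holds
from `left` to `right`.  The relation `P₂` is the complement of `adj` on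
`left × right`. -/
structure BipartiteGraph (V : Type*) where
  left : Set V
  right : Set V
  adj : V → V → Prop
  left_nonempty : left.Nonempty
  right_nonempty : right.Nonempty
  union_eq : left ∪ right = Set.univ
  disjoint_sides : Disjoint left right
  adj_dom : ∀ a b, adj a b → a ∈ left ∧ b ∈ right

/-- The two sides of a bipartite graph. -/
inductive BSide : Type
  | l : BSide
  | r : BSide
deriving DecidableEq

namespace BipartiteGraph

variable {V : Type*} (Γ : BipartiteGraph V)

/-- The side of the graph indexed by an element of `BSide`. -/
def side : BSide → Set V
  | BSide.l => Γ.left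
  | BSide.r => Γ.right

/-- `Γ` is (isomorphic to) the random bipartite graph: it is countable, both
sides are infinite, and it satisfies the extension properties `Θₙ` for all `n`. -/
structure IsRandom : Prop where
  countable : Countable V
  left_infinite : Γ.left.Infinite
  right_infinite : Γ.right.Infinite
  ext_left : ∀ X₁ X₂ : Finset V, ↑X₁ ⊆ Γ.left → ↑X₂ ⊆ Γ.left → Disjoint X₁ X₂ →
      ∃ v ∈ Γ.right, (∀ x ∈ X₁, Γ.adj x v) ∧ (∀ x ∈ X₂, ¬ Γ.adj x v)
  ext_right : ∀ X₁ X₂ : Finset V, ↑X₁ ⊆ Γ.right → ↑X₂ ⊆ Γ.right → Disjoint X₁ X₂ →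
      ∃ v ∈ Γ.left, (∀ x ∈ X₁, Γ.adj v x) ∧ (∀ x ∈ X₂, ¬ Γ.adj v x)

/-- `Sym_{l,r}(Γ)`: the group of permutations of `V` preserving both sides. -/
def symLR : Subgroup (Equiv.Perm V) where
  carrier := {g | (∀ v, g v ∈ Γ.left ↔ v ∈ Γ.left) ∧ (∀ v, g v ∈ Γ.right ↔ v ∈ Γ.right)}
  one_mem' := ⟨fun _ => Iff.rfl, fun _ => Iff.rfl⟩
  mul_mem' := by
    rintro a b ⟨hal, har⟩ ⟨hbl, hbr⟩
    exact ⟨fun v => (hal (b v)).trans (hbl v), fun v => (har (b v)).trans (hbr v)⟩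
  inv_mem' := by
    rintro a ⟨hal, har⟩
    refine ⟨fun v => ?_, fun v => ?_⟩
    · have h := hal (a⁻¹ v); rw [Equiv.Perm.coe_inv, Equiv.apply_symm_apply] at h; exact h.symm
    · have h := har (a⁻¹ v); rw [Equiv.Perm.coe_inv, Equiv.apply_symm_apply] at h; exact h.symm

/-- The automorphism group of `Γ`: side-preserving permutations preserving `adj`
(and hence both cross-types). -/
def autGroup : Subgroup (Equiv.Perm V) where
  carrier := {g | g ∈ Γ.symLR ∧ ∀ a b, Γ.adj a b ↔ Γ.adj (g a) (g b)}
  one_mem' := ⟨Γ.symLR.one_mem, fun _ _ => Iff.rfl⟩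
  mul_mem' := by
    rintro a b ⟨ha, ha2⟩ ⟨hb, hb2⟩
    exact ⟨mul_mem ha hb, fun x y => (hb2 x y).trans (ha2 (b x) (b y))⟩
  inv_mem' := by
    rintro a ⟨ha, ha2⟩
    refine ⟨inv_mem ha, fun x y => ?_⟩
    have h := ha2 (a⁻¹ x) (a⁻¹ y)
    rw [Equiv.Perm.coe_inv, Equiv.apply_symm_apply, Equiv.apply_symm_apply] at h
    exact h.symm

/-- A permutation `g` is a switch with respect to a set `A` if it preserves the
sides and, for every cross-edge `(a, b)`, the cross-type of `(a, b)` is preserved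
if and only if `|{a, b} ∩ A| ≠ 1`. -/
def IsSwitch (g : Equiv.Perm V) (A : Set V) : Prop :=
  g ∈ Γ.symLR ∧ ∀ a ∈ Γ.left, ∀ b ∈ Γ.right,
    ((Γ.adj a b ↔ Γ.adj (g a) (g b)) ↔ ({a, b} ∩ A : Set V).ncard ≠ 1)

/-- The restriction of a map `g` to a set `S` is a switch with respect to `A`:
the condition of `IsSwitch` holds for all cross-edges inside `S`. -/
def IsSwitchOn (g : V → V) (S : Set V) (A : Set V) : Prop :=
  ∀ a ∈ S ∩ Γ.left, ∀ b ∈ S ∩ Γ.right,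
    ((Γ.adj a b ↔ Γ.adj (g a) (g b)) ↔ ({a, b} ∩ A : Set V).ncard ≠ 1)

/-- The restriction of a map `g` to a set `S` is an isomorphism: `g` preserves
the cross-type of every cross-edge inside `S`. -/
def IsIsoOn (g : V → V) (S : Set V) : Prop :=
  ∀ a ∈ S ∩ Γ.left, ∀ b ∈ S ∩ Γ.right, (Γ.adj a b ↔ Γ.adj (g a) (g b))

end BipartiteGraph

/-- A subgroup of the full symmetric group is closed (in the topology of
pointwise convergence) iff it contains every permutation which agrees with some
member of the subgroup on each finite subset. -/
def IsClosedSubgroup {V : Type*} (G : Subgroup (Equiv.Perm V)) : Prop :=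
  ∀ g : Equiv.Perm V, (∀ F : Finset V, ∃ h ∈ G, ∀ x ∈ F, h x = g x) → g ∈ G

/-- The closed subgroup generated by a set of permutations: the intersection of
all closed subgroups containing the set. -/
def closedClosure {V : Type*} (S : Set (Equiv.Perm V)) : Subgroup (Equiv.Perm V) :=
  sInf {G : Subgroup (Equiv.Perm V) | IsClosedSubgroup G ∧ S ⊆ ↑G}

namespace BipartiteGraph

variable {V : Type*} (Γ : BipartiteGraph V)

/-- The switch group `S_X(Γ)`: the closed subgroup of `Sym_{l,r}(Γ)` generated
by `Aut(Γ)` together with all switches with respect to a single vertex `v ∈ R_i`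
for `i ∈ X`. -/
def switchGroup (X : Set BSide) : Subgroup (Equiv.Perm V) :=
  closedClosure ((Γ.autGroup : Set (Equiv.Perm V)) ∪
    {g | ∃ i ∈ X, ∃ v ∈ Γ.side i, Γ.IsSwitch g {v}})

/-- The group `S_X(Γ)* `: the closed subgroup generated by `S_X(Γ)` together with
a switch `ρ` with respect to the whole side `R_l`. -/
def switchGroupStar (X : Set BSide) : Subgroup (Equiv.Perm V) :=
  closedClosure ((Γ.switchGroup X : Set (Equiv.Perm V)) ∪ {g | Γ.IsSwitch g Γ.left})

/-- Membership in `Aut(Γ)*`, the group of side-preserving permutations which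
either preserve all cross-types on `R_l × R_r` or exchange all cross-types on
`R_l × R_r`. -/
def InAutStar (g : Equiv.Perm V) : Prop :=
  g ∈ Γ.symLR ∧
    ((∀ a ∈ Γ.left, ∀ b ∈ Γ.right, (Γ.adj a b ↔ Γ.adj (g a) (g b))) ∨
     (∀ a ∈ Γ.left, ∀ b ∈ Γ.right, (Γ.adj a b ↔ ¬ Γ.adj (g a) (g b))))

/-- The number of cross-edges of cross-type `P₁` inside the set `S`. -/
noncomputable def edgeCount (S : Set V) : ℕ :=
  {p : V × V | p.1 ∈ S ∧ p.2 ∈ S ∧ Γ.adj p.1 p.2}.ncard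

/-- `g` preserves the parity of cross-types on `S`: the number of `P₁`
cross-edges in `S` is even iff the number of `P₁` cross-edges in `g[S]` is even. -/
def PreservesParityOn (g : V → V) (S : Set V) : Prop :=
  Even (Γ.edgeCount S) ↔ Even (Γ.edgeCount (g '' S))

/-- An `(m × n)`-subgraph of `Γ`: a finite set of vertices with `m` vertices on
the left side and `n` vertices on the right side. -/
def IsMNSubgraph (S : Set V) (m n : ℕ) : Prop :=
  S.Finite ∧ (S ∩ Γ.left).ncard = m ∧ (S ∩ Γ.right).ncard = n

end BipartiteGraph

/-! `S_X(Γ)*` is closed, so it contains every permutation agreeing with one of its members on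
each finite set; and since both sides of `Γ` are infinite, every finite set lies in one with
at least two vertices on each side. -/

lemma isClosedSubgroup_closedClosure {V : Type*} (S : Set (Equiv.Perm V)) :
    IsClosedSubgroup (closedClosure S) := by
  intro g hg
  rw [closedClosure, Subgroup.mem_sInf]
  rintro G hG
  refine hG.1 g fun F => ?_
  obtain ⟨h, hh, hagree⟩ := hg F
  exact ⟨h, Subgroup.mem_sInf.mp hh G hG, hagree⟩

lemma Finset.two_le_ncard_inter {V : Type*} {s : Set V} {T : Finset V} {a b : V} (hab : a ≠ b)
    (ha : a ∈ s) (hb : b ∈ s) (haT : a ∈ T) (hbT : b ∈ T) :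
    2 ≤ ((T : Set V) ∩ s).ncard :=
  calc 2 = ({a, b} : Set V).ncard := (Set.ncard_pair hab).symm
    _ ≤ ((T : Set V) ∩ s).ncard :=
      Set.ncard_le_ncard (by rintro x (rfl | rfl) <;> simp [*]) (T.finite_toSet.inter_of_left _)

theorem mem_switchGroupStar_of_finite_restrictions_general {V : Type*} (Γ : BipartiteGraph V)
    (hΓ : Γ.IsRandom) (X : Set BSide) (g : Equiv.Perm V)
    (h : ∀ T : Finset V, 2 ≤ ((T : Set V) ∩ Γ.left).ncard →
      2 ≤ ((T : Set V) ∩ Γ.right).ncard →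
      ∃ h' ∈ Γ.switchGroupStar X, ∀ x ∈ T, g x = h' x) :
    g ∈ Γ.switchGroupStar X := by
  classical
  obtain ⟨a, ha, b, hb, hab⟩ := hΓ.left_infinite.nontrivial
  obtain ⟨c, hc, d, hd, hcd⟩ := hΓ.right_infinite.nontrivial
  refine isClosedSubgroup_closedClosure _ g fun F => ?_
  let T := F ∪ {a, b, c, d}
  obtain ⟨h', hh', hagree⟩ := h T
    (Finset.two_le_ncard_inter hab ha hb (by simp [T]) (by simp [T]))
    (Finset.two_le_ncard_inter hcd hc hd (by simp [T]) (by simp [T]))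
  exact ⟨h', hh', fun x hx => (hagree x (by simp [T, hx])).symm⟩

/-- **Lemma 5.2.** Let `X ⊆ {l, r}`.  If `g ∈ Sym_{l,r}(Γ)` is such that for
every finite `T ⊆ Γ` with at least two vertices on each side the restriction
`g ↾ T` belongs to `F(S_X(Γ)*)` (i.e. agrees on `T` with some member of
`S_X(Γ)*`), then `g ∈ S_X(Γ)*`. -/
theorem mem_switchGroupStar_of_finite_restrictions {V : Type*} (Γ : BipartiteGraph V)
    (hΓ : Γ.IsRandom) (X : Set BSide) (g : Equiv.Perm V) (hg : g ∈ Γ.symLR)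
    (h : ∀ T : Finset V, 2 ≤ ((T : Set V) ∩ Γ.left).ncard →
      2 ≤ ((T : Set V) ∩ Γ.right).ncard →
      ∃ h' ∈ Γ.switchGroupStar X, ∀ x ∈ T, g x = h' x) :
    g ∈ Γ.switchGroupStar X :=
  mem_switchGroupStar_of_finite_restrictions_general Γ hΓ X g h
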